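/- Let M be a finite matroid with the (t,2t)-property. Then M has no restriction isomorphic to the uniform matroid U_{t,3t}; that is, there is no X ⊆ E(M) with M|X ≅ U_{t,3t}. -/

import Mathlib

open Set

/-- A circuit of a matroid: a minimal dependent set. -/
def IsCircuit {α : Type*} (M : Matroid α) (C : Set α) : Prop :=
  M.Dep C ∧ ∀ D, D ⊂ C → ¬ M.Dep D

/-- A cocircuit of a matroid: a circuit of the dual. -/
def IsCocircuit {α : Type*} (M : Matroid α) (C : Set α) : Prop :=
  IsCircuit M✶ C

/-- `M` has the `(t,ℓ)`-property: every `t`-element subset of the ground set is contained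
in an `ℓ`-element circuit and an `ℓ`-element cocircuit. -/
def HasTLProperty {α : Type*} (M : Matroid α) (t ℓ : ℕ) : Prop :=
  ∀ X ⊆ M.E, X.ncard = t →
    (∃ C, IsCircuit M C ∧ C.ncard = ℓ ∧ X ⊆ C) ∧
    (∃ C, IsCocircuit M C ∧ C.ncard = ℓ ∧ X ⊆ C)

/-! A `t`-subset `T` of a `U_{t,3t}`-restriction `X` lies in a `2t`-element cocircuit `K`, which
leaves at least `t` elements of `X` outside it; pick a `t`-subset `S` of these and `e ∈ T`.
A circuit inside `S + e` would have to pass through `e` and so meet `K` in `{e}` alone, which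
circuit–cocircuit orthogonality forbids. Hence `S + e` is independent, yet it has `t + 1`
elements of `X`. -/

theorem isCircuit_iff_matroid_isCircuit {α : Type*} {M : Matroid α} {C : Set α} :
    IsCircuit M C ↔ M.IsCircuit C := by
  rw [Matroid.isCircuit_def, minimal_iff_forall_ssubset]
  rfl

theorem IsCocircuit.matroid_isCocircuit {α : Type*} {M : Matroid α} {K : Set α}
    (hK : IsCocircuit M K) : M.IsCocircuit K :=
  isCircuit_iff_matroid_isCircuit.1 hK

theorem Matroid.IsCocircuit.indep_insert_of_disjoint {α : Type*} {M : Matroid α} {K S : Set α}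
    {e : α} (hK : M.IsCocircuit K) (hS : M.Indep S) (hSK : Disjoint S K) (he : e ∈ K) :
    M.Indep (insert e S) := by
  by_contra hdep
  obtain ⟨C, hCsub, hC⟩ :=
    (M.not_indep_iff (insert_subset (hK.subset_ground he) hS.subset_ground)).1 hdep
      |>.exists_isCircuit_subset
  have heC : e ∈ C := by
    by_contra heC
    exact hC.not_indep (hS.subset ((subset_insert_iff_of_notMem heC).1 hCsub))
  refine hC.inter_isCocircuit_ne_singleton hK (e := e) (Subset.antisymm ?_ (by simp [heC, he]))
  rintro x ⟨hxC, hxK⟩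
  rcases hCsub hxC with rfl | hxS
  · rfl
  · exact absurd hxK (hSK.notMem_of_mem_left hxS)

theorem statement9_general {α : Type*} (M : Matroid α) (t : ℕ) (ht : 0 < t)
    (hprop : HasTLProperty M t (2 * t)) :
    ¬ ∃ X ⊆ M.E, X.ncard = 3 * t ∧ ∀ Y ⊆ X, (M.Indep Y ↔ Y.ncard ≤ t) := by
  rintro ⟨X, hXE, hXcard, hX⟩
  obtain ⟨T, hTX, hTcard⟩ := exists_subset_card_eq (show t ≤ X.ncard by omega)
  obtain ⟨-, K, hK, hKcard, hTK⟩ := hprop T (hTX.trans hXE) hTcard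
  have hKfin : K.Finite := finite_of_ncard_pos (by omega)
  obtain ⟨S, hSXK, hScard⟩ :=
    exists_subset_card_eq (show t ≤ (X \ K).ncard by have := le_ncard_sdiff K X hKfin; omega)
  have hSX : S ⊆ X := hSXK.trans sdiff_subset
  obtain ⟨e, heT⟩ : T.Nonempty := nonempty_of_ncard_ne_zero (by omega)
  have heS : e ∉ S := fun h ↦ (hSXK h).2 (hTK heT)
  have hSindep : M.Indep S := (hX S hSX).2 hScard.le
  have hSeindep : M.Indep (insert e S) :=
    hK.matroid_isCocircuit.indep_insert_of_disjoint hSindep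
      (disjoint_left.2 fun _ hx ↦ (hSXK hx).2) (hTK heT)
  have hSecard := (hX _ (insert_subset (hTX heT) hSX)).1 hSeindep
  rw [ncard_insert_of_notMem heS (finite_of_ncard_pos (by omega)), hScard] at hSecard
  omega

theorem statement9 {α : Type*} (M : Matroid α) (hfin : M.E.Finite) (t : ℕ) (ht : 0 < t)
    (hprop : HasTLProperty M t (2 * t)) :
    ¬ ∃ X ⊆ M.E, X.ncard = 3 * t ∧ ∀ Y ⊆ X, (M.Indep Y ↔ Y.ncard ≤ t) :=
  statement9_general M t ht hprop
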